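/- arXiv:2510.18712 — 3 statements merged into one kernel-verified Lean document; each statement's English description precedes it below -/
import Mathlib

section
/- Let N, n be positive natural numbers, κ : ℝ, A, W, P : Matrix (Fin n) (Fin n) ℝ with P invertible and symmetric, W positive semidefinite, G_i : Fin N → Matrix (Fin n) (Fin n) ℝ with each G_i i symmetric positive semidefinite, G = ∑ i, G_i i, and Q : Matrix (Fin N) (Fin N) ℝ symmetric. With D = -P⁻¹ * A - Aᵀ * P⁻¹ - P⁻¹ * W * P⁻¹ + G, A* = blockDiag (fun i => A - (N : ℝ) • (P * G_i i)) - κ • (Q ⊗ₖ P), and 𝒩 = (1 : Matrix (Fin N) (Fin N) ℝ) ⊗ₖ P⁻¹, the matrix ((1 : Matrix (Fin N) (Fin N) ℝ) ⊗ₖ G - (2 * κ) • (Q ⊗ₖ (1 : Matrix (Fin n) (Fin n) ℝ))) - ((1 : Matrix (Fin N) (Fin N) ℝ) ⊗ₖ D + 𝒩 * A* + A*ᵀ * 𝒩) is positive semidefinite. -/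
/-!
Since `𝒩` is symmetric, `𝒩 A* + A*ᵀ 𝒩 = S + Sᵀ` with `S = 𝒩 A*`, and `P⁻¹` cancels the factor `P`
in both the local gains `N P G_i` and the consensus term `κ (Q ⊗ P)`:
`S = blockDiag (P⁻¹ A - N G_i) - κ (Q ⊗ I)`. The consensus terms of `S + Sᵀ` are exactly
`-2κ (Q ⊗ I)`, and in each diagonal block the drift terms `P⁻¹ A + Aᵀ P⁻¹` cancel against those
of `D`, so the matrix in question is `blockDiag (P⁻¹ W P⁻¹ + 2N G_i)`, whose blocks are
positive semidefinite.
-/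

open Matrix Kronecker BigOperators

/-- Block-diagonal matrix indexed by `Fin N × Fin n` with diagonal blocks `G i`. -/
def blockDiag {N n : ℕ} (G : Fin N → Matrix (Fin n) (Fin n) ℝ) :
    Matrix (Fin N × Fin n) (Fin N × Fin n) ℝ :=
  Matrix.of fun p q => if p.1 = q.1 then G p.1 p.2 q.2 else 0

open scoped MatrixOrder ComplexOrder in
theorem Matrix.PosSemidef.blockDiagonal {𝕜 m o : Type*} [RCLike 𝕜] [Fintype m] [Fintype o]
    [DecidableEq m] [DecidableEq o] {G : o → Matrix m m 𝕜} (hG : ∀ i, (G i).PosSemidef) :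
    (Matrix.blockDiagonal G).PosSemidef := by
  choose B hB using fun i => CStarAlgebra.nonneg_iff_eq_star_mul_self.mp (hG i).nonneg
  obtain rfl : G = fun i => (B i)ᴴ * B i := funext hB
  rw [blockDiagonal_mul, ← blockDiagonal_conjTranspose]
  exact posSemidef_conjTranspose_mul_self _

section blockDiag

variable {N n : ℕ}

theorem blockDiag_eq_reindexAlgEquiv (G : Fin N → Matrix (Fin n) (Fin n) ℝ) :
    _root_.blockDiag G = reindexAlgEquiv ℝ ℝ (Equiv.prodComm _ _) (blockDiagonal G) := by
  ext ⟨i, k⟩ ⟨j, l⟩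
  simp [_root_.blockDiag, blockDiagonal_apply]

theorem one_kronecker_eq_blockDiag (B : Matrix (Fin n) (Fin n) ℝ) :
    (1 : Matrix (Fin N) (Fin N) ℝ) ⊗ₖ B = _root_.blockDiag fun _ => B := by
  rw [blockDiag_eq_reindexAlgEquiv, coe_reindexAlgEquiv, one_kronecker]

theorem blockDiag_mul (G H : Fin N → Matrix (Fin n) (Fin n) ℝ) :
    _root_.blockDiag G * _root_.blockDiag H = _root_.blockDiag (G * H) := by
  rw [blockDiag_eq_reindexAlgEquiv, blockDiag_eq_reindexAlgEquiv, ← map_mul, ← blockDiagonal_mul]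
  rfl

theorem blockDiag_transpose (G : Fin N → Matrix (Fin n) (Fin n) ℝ) :
    (_root_.blockDiag G)ᵀ = _root_.blockDiag (fun i => (G i)ᵀ) := by
  simp only [blockDiag_eq_reindexAlgEquiv, coe_reindexAlgEquiv, transpose_reindex,
    blockDiagonal_transpose]

theorem blockDiag_add (G H : Fin N → Matrix (Fin n) (Fin n) ℝ) :
    _root_.blockDiag (G + H) = _root_.blockDiag G + _root_.blockDiag H := by
  simp only [blockDiag_eq_reindexAlgEquiv, blockDiagonal_add, map_add]

theorem blockDiag_sub (G H : Fin N → Matrix (Fin n) (Fin n) ℝ) :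
    _root_.blockDiag (G - H) = _root_.blockDiag G - _root_.blockDiag H := by
  simp only [blockDiag_eq_reindexAlgEquiv, blockDiagonal_sub, map_sub]

theorem Matrix.PosSemidef.blockDiag {G : Fin N → Matrix (Fin n) (Fin n) ℝ}
    (hG : ∀ i, (G i).PosSemidef) : (_root_.blockDiag G).PosSemidef := by
  rw [blockDiag_eq_reindexAlgEquiv, coe_reindexAlgEquiv]
  exact (PosSemidef.blockDiagonal hG).submatrix _

end blockDiag

theorem one_kronecker_inv_mul_closedLoop {N n : ℕ} {P : Matrix (Fin n) (Fin n) ℝ} (hP : IsUnit P)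
    (A : Matrix (Fin n) (Fin n) ℝ) (G : Fin N → Matrix (Fin n) (Fin n) ℝ)
    (Q : Matrix (Fin N) (Fin N) ℝ) (c κ : ℝ) :
    ((1 : Matrix (Fin N) (Fin N) ℝ) ⊗ₖ P⁻¹) *
        (_root_.blockDiag (fun i => A - c • (P * G i)) - κ • (Q ⊗ₖ P)) =
      _root_.blockDiag (fun i => P⁻¹ * A - c • G i) - κ • (Q ⊗ₖ (1 : Matrix (Fin n) (Fin n) ℝ)) := by
  have hPinv : P⁻¹ * P = 1 := nonsing_inv_mul P ((isUnit_iff_isUnit_det P).mp hP)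
  rw [mul_sub, mul_smul_comm, ← mul_kronecker_mul, one_mul, hPinv, one_kronecker_eq_blockDiag,
    blockDiag_mul]
  congr 3 with i
  rw [Pi.mul_apply, mul_sub, mul_smul_comm, ← mul_assoc, hPinv, one_mul]

theorem one_kronecker_inv_closedLoop_lyapunov {N n : ℕ} {P : Matrix (Fin n) (Fin n) ℝ}
    (hP : IsUnit P) (hPsym : Pᵀ = P) (A : Matrix (Fin n) (Fin n) ℝ)
    {G : Fin N → Matrix (Fin n) (Fin n) ℝ} (hGsym : ∀ i, (G i)ᵀ = G i)
    {Q : Matrix (Fin N) (Fin N) ℝ} (hQsym : Qᵀ = Q) (c κ : ℝ) :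
    ((1 : Matrix (Fin N) (Fin N) ℝ) ⊗ₖ P⁻¹) *
        (_root_.blockDiag (fun i => A - c • (P * G i)) - κ • (Q ⊗ₖ P)) +
      (_root_.blockDiag (fun i => A - c • (P * G i)) - κ • (Q ⊗ₖ P))ᵀ *
        ((1 : Matrix (Fin N) (Fin N) ℝ) ⊗ₖ P⁻¹) =
      _root_.blockDiag (fun i => P⁻¹ * A + Aᵀ * P⁻¹ - (2 * c) • G i)
        - (2 * κ) • (Q ⊗ₖ (1 : Matrix (Fin n) (Fin n) ℝ)) := by
  have hPinvsym : P⁻¹ᵀ = P⁻¹ := by rw [transpose_nonsing_inv, hPsym]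
  have hkron_symm : ((1 : Matrix (Fin N) (Fin N) ℝ) ⊗ₖ P⁻¹)ᵀ = 1 ⊗ₖ P⁻¹ := by
    rw [← kroneckerMap_transpose, transpose_one, hPinvsym]
  nth_rw 2 [← hkron_symm]
  rw [← transpose_mul, one_kronecker_inv_mul_closedLoop hP, transpose_sub,
    transpose_smul, _root_.blockDiag_transpose, ← kroneckerMap_transpose, hQsym, transpose_one]
  have hblocks : (fun i => P⁻¹ * A + Aᵀ * P⁻¹ - (2 * c) • G i) =
      (fun i => P⁻¹ * A - c • G i) + fun i => (P⁻¹ * A - c • G i)ᵀ := by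
    ext1 i
    rw [Pi.add_apply, transpose_sub, transpose_smul, transpose_mul, hPinvsym, hGsym]
    module
  rw [hblocks, blockDiag_add]
  module

theorem stmt8_general {N n : ℕ} (κ : ℝ)
    (A W P : Matrix (Fin n) (Fin n) ℝ) (hP : IsUnit P) (hPsym : Pᵀ = P)
    (hW : W.PosSemidef)
    (G_i : Fin N → Matrix (Fin n) (Fin n) ℝ)
    (hGipsd : ∀ i, (G_i i).PosSemidef)
    (G : Matrix (Fin n) (Fin n) ℝ)
    (Q : Matrix (Fin N) (Fin N) ℝ) (hQsym : Qᵀ = Q)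
    (D : Matrix (Fin n) (Fin n) ℝ)
    (hD : D = -P⁻¹ * A - Aᵀ * P⁻¹ - P⁻¹ * W * P⁻¹ + G)
    (Astar 𝒩 : Matrix (Fin N × Fin n) (Fin N × Fin n) ℝ)
    (hAstar : Astar = blockDiag (fun i => A - (N : ℝ) • (P * G_i i)) - κ • (Q ⊗ₖ P))
    (h𝒩 : 𝒩 = (1 : Matrix (Fin N) (Fin N) ℝ) ⊗ₖ P⁻¹) :
    (((1 : Matrix (Fin N) (Fin N) ℝ) ⊗ₖ G
        - (2 * κ) • (Q ⊗ₖ (1 : Matrix (Fin n) (Fin n) ℝ)))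
      - ((1 : Matrix (Fin N) (Fin N) ℝ) ⊗ₖ D + 𝒩 * Astar + Astarᵀ * 𝒩)).PosSemidef := by
  have hWP : (P⁻¹ * W * P⁻¹).PosSemidef := by
    simpa [conjTranspose_eq_transpose_of_trivial, transpose_nonsing_inv, hPsym] using
      hW.conjTranspose_mul_mul_same P⁻¹
  have hlyap := one_kronecker_inv_closedLoop_lyapunov hP hPsym A (G := G_i)
    (fun i => (hGipsd i).isHermitian) hQsym N κ
  rw [← h𝒩, ← hAstar] at hlyap
  convert PosSemidef.blockDiag fun i => hWP.add ((hGipsd i).smul (by positivity : 0 ≤ 2 * (N : ℝ)))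
    using 1
  calc _ = _root_.blockDiag (fun _ => G) - _root_.blockDiag (fun _ => D)
        - _root_.blockDiag (fun i => P⁻¹ * A + Aᵀ * P⁻¹ - (2 * (N : ℝ)) • G_i i) := by
        rw [add_assoc, hlyap, one_kronecker_eq_blockDiag, one_kronecker_eq_blockDiag]
        abel
    _ = _ := by
        rw [← blockDiag_sub, ← blockDiag_sub]
        congr 1 with i : 1
        simp only [Pi.sub_apply, hD, neg_mul]
        module

theorem stmt8 {N n : ℕ} (hN : 0 < N) (hn : 0 < n) (κ : ℝ)
    (A W P : Matrix (Fin n) (Fin n) ℝ) (hP : IsUnit P) (hPsym : Pᵀ = P)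
    (hW : W.PosSemidef)
    (G_i : Fin N → Matrix (Fin n) (Fin n) ℝ)
    (hGisym : ∀ i, (G_i i)ᵀ = G_i i) (hGipsd : ∀ i, (G_i i).PosSemidef)
    (G : Matrix (Fin n) (Fin n) ℝ) (hG : G = ∑ i, G_i i)
    (Q : Matrix (Fin N) (Fin N) ℝ) (hQsym : Qᵀ = Q)
    (D : Matrix (Fin n) (Fin n) ℝ)
    (hD : D = -P⁻¹ * A - Aᵀ * P⁻¹ - P⁻¹ * W * P⁻¹ + G)
    (Astar 𝒩 : Matrix (Fin N × Fin n) (Fin N × Fin n) ℝ)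
    (hAstar : Astar = blockDiag (fun i => A - (N : ℝ) • (P * G_i i)) - κ • (Q ⊗ₖ P))
    (h𝒩 : 𝒩 = (1 : Matrix (Fin N) (Fin N) ℝ) ⊗ₖ P⁻¹) :
    (((1 : Matrix (Fin N) (Fin N) ℝ) ⊗ₖ G
        - (2 * κ) • (Q ⊗ₖ (1 : Matrix (Fin n) (Fin n) ℝ)))
      - ((1 : Matrix (Fin N) (Fin N) ℝ) ⊗ₖ D + 𝒩 * Astar + Astarᵀ * 𝒩)).PosSemidef :=
  stmt8_general κ A W P hP hPsym hW G_i hGipsd G Q hQsym D hD Astar 𝒩 hAstar h𝒩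
end

section
/- Let N, n be positive natural numbers, P : Matrix (Fin n) (Fin n) ℝ, G_i : Fin N → Matrix (Fin n) (Fin n) ℝ, G = ∑ i, G_i i, G_d = blockDiag (fun i => G_i i), and U : Matrix (Fin N) (Fin N) ℝ the all-ones matrix. Define Σ : Matrix (Fin N × Fin n) (Fin N × Fin n) ℝ by Σ = (N^2 : ℝ) • (((1 : Matrix (Fin N) (Fin N) ℝ) ⊗ₖ P) * G_d * ((1 : Matrix (Fin N) (Fin N) ℝ) ⊗ₖ P)) - (N : ℝ) • ((U ⊗ₖ P) * G_d * ((1 : Matrix (Fin N) (Fin N) ℝ) ⊗ₖ P)) - (N : ℝ) • (((1 : Matrix (Fin N) (Fin N) ℝ) ⊗ₖ P) * G_d * (U ⊗ₖ P)) + U ⊗ₖ (P * G * P). Then for every v : Fin n → ℝ, Σ *ᵥ (fun p : Fin N × Fin n => v p.2) = 0. -/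
open Matrix Kronecker BigOperators

lemma one_kron_mulVec {N n : ℕ} (M : Matrix (Fin n) (Fin n) ℝ) (x : Fin N × Fin n → ℝ) :
    ((1 : Matrix (Fin N) (Fin N) ℝ) ⊗ₖ M) *ᵥ x = fun p => ∑ l, M p.2 l * x (p.1, l) := by
  funext p
  simp [Matrix.mulVec, dotProduct, Fintype.sum_prod_type,
    Matrix.kroneckerMap_apply, Matrix.one_apply, ite_mul]

lemma U_kron_mulVec {N n : ℕ} (M : Matrix (Fin n) (Fin n) ℝ) (x : Fin N × Fin n → ℝ) :
    ((Matrix.of fun _ _ => (1:ℝ) : Matrix (Fin N) (Fin N) ℝ) ⊗ₖ M) *ᵥ x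
      = fun p => ∑ j, ∑ l, M p.2 l * x (j, l) := by
  funext p
  simp [Matrix.mulVec, dotProduct, Fintype.sum_prod_type, Matrix.kroneckerMap_apply]

lemma blockDiag_mulVec' {N n : ℕ} (G : Fin N → Matrix (Fin n) (Fin n) ℝ)
    (x : Fin N × Fin n → ℝ) :
    _root_.blockDiag G *ᵥ x = fun p => ∑ l, G p.1 p.2 l * x (p.1, l) := by
  funext p
  simp [Matrix.mulVec, dotProduct, Fintype.sum_prod_type, _root_.blockDiag, ite_mul]

lemma sum_mulVec' {N n : ℕ} (M : Fin N → Matrix (Fin n) (Fin n) ℝ) (v : Fin n → ℝ) :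
    (∑ i, M i) *ᵥ v = ∑ i, M i *ᵥ v := by
  funext k
  simp [Matrix.mulVec, dotProduct, Matrix.sum_apply, Finset.sum_mul]
  rw [Finset.sum_comm]

theorem stmt10 {N n : ℕ} (hN : 0 < N) (hn : 0 < n)
    (P : Matrix (Fin n) (Fin n) ℝ)
    (G_i : Fin N → Matrix (Fin n) (Fin n) ℝ)
    (G : Matrix (Fin n) (Fin n) ℝ) (hG : G = ∑ i, G_i i)
    (G_d : Matrix (Fin N × Fin n) (Fin N × Fin n) ℝ)
    (hGd : G_d = blockDiag (fun i => G_i i))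
    (U : Matrix (Fin N) (Fin N) ℝ) (hU : U = Matrix.of fun _ _ => (1 : ℝ))
    (Sig : Matrix (Fin N × Fin n) (Fin N × Fin n) ℝ)
    (hSig : Sig = (N ^ 2 : ℝ) • (((1 : Matrix (Fin N) (Fin N) ℝ) ⊗ₖ P) * G_d *
          ((1 : Matrix (Fin N) (Fin N) ℝ) ⊗ₖ P))
        - (N : ℝ) • ((U ⊗ₖ P) * G_d * ((1 : Matrix (Fin N) (Fin N) ℝ) ⊗ₖ P))
        - (N : ℝ) • (((1 : Matrix (Fin N) (Fin N) ℝ) ⊗ₖ P) * G_d * (U ⊗ₖ P))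
        + U ⊗ₖ (P * G * P)) :
    ∀ v : Fin n → ℝ, Sig *ᵥ (fun p : Fin N × Fin n => v p.2) = 0 := by
  intro v
  subst hSig hGd hU hG
  set x : Fin N × Fin n → ℝ := fun p => v p.2 with hx
  have s1 : ((1 : Matrix (Fin N) (Fin N) ℝ) ⊗ₖ P) *ᵥ x = fun p => (P *ᵥ v) p.2 := by
    rw [one_kron_mulVec]; rfl
  have s2 : _root_.blockDiag (fun i => G_i i) *ᵥ (fun p : Fin N × Fin n => (P *ᵥ v) p.2)
      = fun p => (G_i p.1 *ᵥ (P *ᵥ v)) p.2 := by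
    rw [blockDiag_mulVec']; rfl
  have s3 : ((1 : Matrix (Fin N) (Fin N) ℝ) ⊗ₖ P) *ᵥ
      (fun p : Fin N × Fin n => (G_i p.1 *ᵥ (P *ᵥ v)) p.2)
      = fun p => (P *ᵥ (G_i p.1 *ᵥ (P *ᵥ v))) p.2 := by
    rw [one_kron_mulVec]; rfl
  have e1 : (((1 : Matrix (Fin N) (Fin N) ℝ) ⊗ₖ P) * _root_.blockDiag (fun i => G_i i) *
        ((1 : Matrix (Fin N) (Fin N) ℝ) ⊗ₖ P)) *ᵥ x
      = fun p => (P *ᵥ (G_i p.1 *ᵥ (P *ᵥ v))) p.2 := by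
    rw [← Matrix.mulVec_mulVec, ← Matrix.mulVec_mulVec, s1, s2, s3]
  have e2 : (((Matrix.of fun _ _ => (1:ℝ)) : Matrix (Fin N) (Fin N) ℝ) ⊗ₖ P *
        _root_.blockDiag (fun i => G_i i) * ((1 : Matrix (Fin N) (Fin N) ℝ) ⊗ₖ P)) *ᵥ x
      = fun p => ∑ j, (P *ᵥ (G_i j *ᵥ (P *ᵥ v))) p.2 := by
    rw [← Matrix.mulVec_mulVec, ← Matrix.mulVec_mulVec, s1, s2, U_kron_mulVec]
    funext p
    refine Finset.sum_congr rfl fun j _ => ?_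
    simp [Matrix.mulVec, dotProduct]
  have s1' : (((Matrix.of fun _ _ => (1:ℝ)) : Matrix (Fin N) (Fin N) ℝ) ⊗ₖ P) *ᵥ x
      = fun p => (N : ℝ) * (P *ᵥ v) p.2 := by
    rw [U_kron_mulVec]
    funext p
    simp [hx, Matrix.mulVec, dotProduct, Finset.mul_sum]
  have e3 : (((1 : Matrix (Fin N) (Fin N) ℝ) ⊗ₖ P) * _root_.blockDiag (fun i => G_i i) *
        (((Matrix.of fun _ _ => (1:ℝ)) : Matrix (Fin N) (Fin N) ℝ) ⊗ₖ P)) *ᵥ x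
      = fun p => (N : ℝ) * (P *ᵥ (G_i p.1 *ᵥ (P *ᵥ v))) p.2 := by
    rw [← Matrix.mulVec_mulVec, ← Matrix.mulVec_mulVec, s1']
    have h : (fun p : Fin N × Fin n => (N : ℝ) * (P *ᵥ v) p.2)
        = (N : ℝ) • (fun p : Fin N × Fin n => (P *ᵥ v) p.2) := by
      funext p; simp
    rw [h, Matrix.mulVec_smul, s2, Matrix.mulVec_smul, s3]
    rfl
  have hmat : ((P * (∑ i, G_i i) * P) *ᵥ v)
      = ∑ j, P *ᵥ (G_i j *ᵥ (P *ᵥ v)) := by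
    rw [Matrix.mul_sum, Matrix.sum_mul, sum_mulVec']
    refine Finset.sum_congr rfl fun j _ => ?_
    rw [Matrix.mulVec_mulVec, Matrix.mulVec_mulVec]
  have e4 : ((((Matrix.of fun _ _ => (1:ℝ)) : Matrix (Fin N) (Fin N) ℝ)) ⊗ₖ
        (P * (∑ i, G_i i) * P)) *ᵥ x
      = fun p => (N : ℝ) * ∑ j, (P *ᵥ (G_i j *ᵥ (P *ᵥ v))) p.2 := by
    rw [U_kron_mulVec]
    funext p
    have inner : ∀ j : Fin N,
        ∑ l, (P * (∑ i, G_i i) * P) p.2 l * x (j, l)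
          = ((P * (∑ i, G_i i) * P) *ᵥ v) p.2 := fun j => rfl
    simp only [inner, Finset.sum_const, Finset.card_univ, Fintype.card_fin, nsmul_eq_mul]
    rw [hmat]
    simp [Finset.sum_apply]
  rw [Matrix.add_mulVec, Matrix.sub_mulVec, Matrix.sub_mulVec, Matrix.smul_mulVec,
    Matrix.smul_mulVec, Matrix.smul_mulVec, e1, e2, e3, e4]
  funext p
  simp only [Pi.add_apply, Pi.sub_apply, Pi.smul_apply, smul_eq_mul, Pi.zero_apply]
  ring
end

section
/- Let N, n be positive natural numbers, λ > 0, g ≥ 0, and κ > g / (2 * λ). Let A, W, P : Matrix (Fin n) (Fin n) ℝ with P invertible and symmetric, W positive semidefinite, G_i : Fin N → Matrix (Fin n) (Fin n) ℝ with each G_i i symmetric positive semidefinite, G = ∑ i, G_i i satisfying ∀ v : Fin n → ℝ, v ⬝ᵥ (G *ᵥ v) ≤ g * (v ⬝ᵥ v), and Q : Matrix (Fin N) (Fin N) ℝ such that for every v : Fin N → ℝ with ∑ i, v i = 0 one has λ * (v ⬝ᵥ v) ≤ v ⬝ᵥ (Q *ᵥ v). Define M = (1 : Matrix (Fin N) (Fin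 N) ℝ) ⊗ₖ (G - P⁻¹ * W * P⁻¹) - (2 * N : ℝ) • blockDiag (fun i => G_i i) - (2 * κ) • (Q ⊗ₖ (1 : Matrix (Fin n) (Fin n) ℝ)). Then for every nonzero x : Fin N × Fin n → ℝ with ∀ k, ∑ i, x (i,k) = 0, one has x ⬝ᵥ (M *ᵥ x) < 0. -/
/-!
Slice `x` into node blocks `xᵢ = x (i, ·)` and coordinate columns `xᵏ = x (·, k)`. The Kronecker
and block-diagonal terms of `M` split along these slices: the first contributes
`∑ᵢ xᵢᵀ (G - P⁻¹ W P⁻¹) xᵢ ≤ g ‖x‖²`, the block-diagonal term is nonnegative, and the consensus term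
is `∑ₖ xᵏᵀ Q xᵏ ≥ λ ‖x‖²` because every column sums to zero. Hence `xᵀ M x ≤ (g - 2κλ) ‖x‖² < 0`.
-/

open Matrix Kronecker BigOperators

namespace Matrix

variable {ι κ R : Type*} [Fintype ι] [Fintype κ]

section Semiring

variable [CommSemiring R]

lemma dotProduct_one_kronecker_mulVec [DecidableEq ι] (B : Matrix κ κ R) (x : ι × κ → R) :
    x ⬝ᵥ (((1 : Matrix ι ι R) ⊗ₖ B) *ᵥ x)
      = ∑ i, (fun k => x (i, k)) ⬝ᵥ (B *ᵥ fun k => x (i, k)) := by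
  simp [dotProduct, mulVec, Fintype.sum_prod_type, one_apply, ite_mul, Finset.mul_sum]

lemma dotProduct_kronecker_one_mulVec [DecidableEq κ] (Q : Matrix ι ι R) (x : ι × κ → R) :
    x ⬝ᵥ ((Q ⊗ₖ (1 : Matrix κ κ R)) *ᵥ x)
      = ∑ k, (fun i => x (i, k)) ⬝ᵥ (Q *ᵥ fun i => x (i, k)) := by
  simp [dotProduct, mulVec, Fintype.sum_prod_type_right, one_apply, Finset.mul_sum]

end Semiring

lemma dotProduct_self_eq_sum_rows [AddCommMonoid R] [Mul R] (x : ι × κ → R) :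
    x ⬝ᵥ x = ∑ i, (fun k => x (i, k)) ⬝ᵥ (fun k => x (i, k)) :=
  Fintype.sum_prod_type _

lemma dotProduct_self_eq_sum_cols [AddCommMonoid R] [Mul R] (x : ι × κ → R) :
    x ⬝ᵥ x = ∑ k, (fun i => x (i, k)) ⬝ᵥ (fun i => x (i, k)) :=
  Fintype.sum_prod_type_right _

section Real

lemma dotProduct_one_kronecker_mulVec_le [DecidableEq ι] {B : Matrix κ κ ℝ} {c : ℝ}
    (hB : ∀ v, v ⬝ᵥ (B *ᵥ v) ≤ c * (v ⬝ᵥ v)) (x : ι × κ → ℝ) :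
    x ⬝ᵥ (((1 : Matrix ι ι ℝ) ⊗ₖ B) *ᵥ x) ≤ c * (x ⬝ᵥ x) := by
  rw [dotProduct_one_kronecker_mulVec, dotProduct_self_eq_sum_rows, Finset.mul_sum]
  exact Finset.sum_le_sum fun i _ => hB _

lemma le_dotProduct_kronecker_one_mulVec [DecidableEq κ] {Q : Matrix ι ι ℝ} {c : ℝ}
    (hQ : ∀ v, ∑ i, v i = 0 → c * (v ⬝ᵥ v) ≤ v ⬝ᵥ (Q *ᵥ v)) {x : ι × κ → ℝ}
    (hx : ∀ k, ∑ i, x (i, k) = 0) :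
    c * (x ⬝ᵥ x) ≤ x ⬝ᵥ ((Q ⊗ₖ (1 : Matrix κ κ ℝ)) *ᵥ x) := by
  rw [dotProduct_kronecker_one_mulVec, dotProduct_self_eq_sum_cols, Finset.mul_sum]
  exact Finset.sum_le_sum fun k _ => hQ _ (hx k)

lemma dotProduct_sub_mulVec_le {G V : Matrix κ κ ℝ} {c : ℝ}
    (hG : ∀ v, v ⬝ᵥ (G *ᵥ v) ≤ c * (v ⬝ᵥ v)) (hV : V.PosSemidef) (v : κ → ℝ) :
    v ⬝ᵥ ((G - V) *ᵥ v) ≤ c * (v ⬝ᵥ v) := by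
  have := hV.dotProduct_mulVec_nonneg v
  rw [sub_mulVec, dotProduct_sub]
  simp only [star_trivial] at this
  linarith [hG v]

lemma PosSemidef.inv_mul_mul_inv [DecidableEq κ] {W P : Matrix κ κ ℝ} (hW : W.PosSemidef)
    (hP : Pᵀ = P) :
    (P⁻¹ * W * P⁻¹).PosSemidef := by
  simpa [conjTranspose_eq_transpose_of_trivial, transpose_nonsing_inv, hP]
    using hW.mul_mul_conjTranspose_same P⁻¹

end Real

end Matrix

lemma dotProduct_blockDiag_mulVec {N n : ℕ} (G : Fin N → Matrix (Fin n) (Fin n) ℝ)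
    (x : Fin N × Fin n → ℝ) :
    x ⬝ᵥ (blockDiag G *ᵥ x) = ∑ i, (fun k => x (i, k)) ⬝ᵥ (G i *ᵥ fun k => x (i, k)) := by
  simp [dotProduct, mulVec, Fintype.sum_prod_type, _root_.blockDiag, ite_mul, Finset.mul_sum]

lemma dotProduct_blockDiag_mulVec_nonneg {N n : ℕ} {G : Fin N → Matrix (Fin n) (Fin n) ℝ}
    (hG : ∀ i, (G i).PosSemidef) (x : Fin N × Fin n → ℝ) :
    0 ≤ x ⬝ᵥ (blockDiag G *ᵥ x) := by
  rw [dotProduct_blockDiag_mulVec]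
  exact Finset.sum_nonneg fun i _ => by simpa using (hG i).dotProduct_mulVec_nonneg _

theorem stmt15_general {N n : ℕ}
    (lam : ℝ) (hlam : 0 < lam) (g : ℝ) (hg0 : 0 ≤ g)
    (κ : ℝ) (hκ : g / (2 * lam) < κ)
    (W P : Matrix (Fin n) (Fin n) ℝ) (hPsym : Pᵀ = P)
    (hW : W.PosSemidef)
    (G_i : Fin N → Matrix (Fin n) (Fin n) ℝ)
    (hGipsd : ∀ i, (G_i i).PosSemidef)
    (G : Matrix (Fin n) (Fin n) ℝ)
    (hgG : ∀ v : Fin n → ℝ, v ⬝ᵥ (G *ᵥ v) ≤ g * (v ⬝ᵥ v))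
    (Q : Matrix (Fin N) (Fin N) ℝ)
    (hQ : ∀ v : Fin N → ℝ, (∑ i, v i) = 0 → lam * (v ⬝ᵥ v) ≤ v ⬝ᵥ (Q *ᵥ v))
    (M : Matrix (Fin N × Fin n) (Fin N × Fin n) ℝ)
    (hM : M = (1 : Matrix (Fin N) (Fin N) ℝ) ⊗ₖ (G - P⁻¹ * W * P⁻¹)
        - (2 * N : ℝ) • blockDiag (fun i => G_i i)
        - (2 * κ) • (Q ⊗ₖ (1 : Matrix (Fin n) (Fin n) ℝ))) :
    ∀ x : Fin N × Fin n → ℝ, x ≠ 0 → (∀ k, (∑ i, x (i, k)) = 0) →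
      x ⬝ᵥ (M *ᵥ x) < 0 := by
  intro x hx hcols
  have hlocal := dotProduct_one_kronecker_mulVec_le (ι := Fin N)
    (dotProduct_sub_mulVec_le hgG (hW.inv_mul_mul_inv hPsym)) x
  have hblock := dotProduct_blockDiag_mulVec_nonneg hGipsd x
  have hconsensus := le_dotProduct_kronecker_one_mulVec hQ hcols
  have hxx : 0 < x ⬝ᵥ x := by simpa using dotProduct_self_star_pos_iff.mpr hx
  have hgap : g < 2 * κ * lam := by
    rw [div_lt_iff₀ (by positivity)] at hκ; linarith
  have hκ0 : 0 ≤ κ := (div_nonneg hg0 (by positivity)).trans hκ.le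
  rw [hM, sub_mulVec, sub_mulVec, dotProduct_sub, dotProduct_sub, smul_mulVec, smul_mulVec,
    dotProduct_smul, dotProduct_smul, smul_eq_mul, smul_eq_mul]
  calc _ ≤ g * (x ⬝ᵥ x) - 2 * N * 0 - 2 * κ * (lam * (x ⬝ᵥ x)) := by gcongr
    _ = (g - 2 * κ * lam) * (x ⬝ᵥ x) := by ring
    _ < 0 := mul_neg_of_neg_of_pos (by linarith) hxx

theorem stmt15 {N n : ℕ} (hN : 0 < N) (hn : 0 < n)
    (lam : ℝ) (hlam : 0 < lam) (g : ℝ) (hg0 : 0 ≤ g)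
    (κ : ℝ) (hκ : g / (2 * lam) < κ)
    (A W P : Matrix (Fin n) (Fin n) ℝ) (hP : IsUnit P) (hPsym : Pᵀ = P)
    (hW : W.PosSemidef)
    (G_i : Fin N → Matrix (Fin n) (Fin n) ℝ)
    (hGisym : ∀ i, (G_i i)ᵀ = G_i i) (hGipsd : ∀ i, (G_i i).PosSemidef)
    (G : Matrix (Fin n) (Fin n) ℝ) (hG : G = ∑ i, G_i i)
    (hgG : ∀ v : Fin n → ℝ, v ⬝ᵥ (G *ᵥ v) ≤ g * (v ⬝ᵥ v))
    (Q : Matrix (Fin N) (Fin N) ℝ)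
    (hQ : ∀ v : Fin N → ℝ, (∑ i, v i) = 0 → lam * (v ⬝ᵥ v) ≤ v ⬝ᵥ (Q *ᵥ v))
    (M : Matrix (Fin N × Fin n) (Fin N × Fin n) ℝ)
    (hM : M = (1 : Matrix (Fin N) (Fin N) ℝ) ⊗ₖ (G - P⁻¹ * W * P⁻¹)
        - (2 * N : ℝ) • blockDiag (fun i => G_i i)
        - (2 * κ) • (Q ⊗ₖ (1 : Matrix (Fin n) (Fin n) ℝ))) :
    ∀ x : Fin N × Fin n → ℝ, x ≠ 0 → (∀ k, (∑ i, x (i, k)) = 0) →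
      x ⬝ᵥ (M *ᵥ x) < 0 :=
  stmt15_general lam hlam g hg0 κ hκ W P hPsym hW G_i hGipsd G hgG Q hQ M hM
end
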